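/- With the setup of the previous combinatorics (coprime 1 < q < n, n/q = [α_1,…,αN], dual n/(n−q) = [a_2,…,a_{e−1}], c- and d-series as defined, b-series as defined, ν the number of leading 2's in the expansion of n/q), define Δ_k = 1 + Σ_{t=ν+1}^{k−1} c_{l_t} and Γ_k = Σ_{t=ν+1}^{k−1} d_{l_t} for ν+1 ≤ k ≤ N+1, where l_j = 2 + Σ_{p=1}^j(α_p−2). Then for all 2 ≤ t ≤ e−2 one has c_{t+2} = c_{t+1} + Δ_{b_t} and d_{t+2} = d_{t+1} + Γ_{b_t}. -/

import Mathlib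

/-!
With `D_t = c_{t+2} - c_{t+1}`, the recurrence `c_{j+1} = a_j c_j - c_{j-1}` reads
`D_t = D_{t-1} + (a_{t+1} - 2) c_{t+1}`, so `D_t = D_2 + ∑_{3 < j ≤ t+1} (a_j - 2) c_j`.
Riemenschneider's point diagram duality between `n/q` and `n/(n-q)` identifies `a_j - 2` with the
number of `p < N` such that `l_p = j`, and the minimality defining `b_t` shows that the `p` with
`3 ≤ l_p ≤ t + 1` are exactly those with `ν < p < b_t`. Grouping `∑_{ν < p < b_t} c_{l_p}` by the
value of `l_p` thus gives `D_t - D_2 + (a_3 - 2) c_3`, and the initial values finish the proof; the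
same computation applies to `d`.
-/

/-- The Jung–Hirzebruch negative continued fraction. -/
def ncf : List ℤ → ℚ
  | [] => 0
  | a :: l => (a : ℚ) - (ncf l)⁻¹

open Finset

theorem one_lt_ncf : ∀ {L : List ℤ}, (∀ y ∈ L, 2 ≤ y) → L ≠ [] → 1 < ncf L
  | [x], h, _ => by
    have hx : (2 : ℚ) ≤ x := by exact_mod_cast h x (by simp)
    simp only [ncf, inv_zero, sub_zero]
    linarith
  | x :: y :: l, h, _ => by
    have hx : (2 : ℚ) ≤ x := by exact_mod_cast h x (by simp)
    have htail := inv_lt_one_of_one_lt₀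
      (one_lt_ncf (fun z hz => h z (List.mem_cons_of_mem x hz)) (List.cons_ne_nil y l))
    rw [ncf]
    linarith

theorem inv_ncf_nonneg_lt_one {L : List ℤ} (h : ∀ y ∈ L, 2 ≤ y) :
    0 ≤ (ncf L)⁻¹ ∧ (ncf L)⁻¹ < 1 := by
  rcases eq_or_ne L [] with rfl | hL
  · simp [ncf]
  · have := one_lt_ncf h hL
    exact ⟨by positivity, inv_lt_one_of_one_lt₀ this⟩

theorem ceil_ncf_cons (x : ℤ) {l : List ℤ} (h : ∀ y ∈ l, 2 ≤ y) : ⌈ncf (x :: l)⌉ = x := by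
  obtain ⟨h0, h1⟩ := inv_ncf_nonneg_lt_one h
  rw [Int.ceil_eq_iff, ncf]
  constructor <;> linarith

theorem ncf_injOn : Set.InjOn ncf {L | ∀ y ∈ L, 2 ≤ y} := by
  intro L₁ h₁ L₂ h₂ he
  induction L₁ generalizing L₂ with
  | nil =>
    cases L₂ with
    | nil => rfl
    | cons y m =>
      have := one_lt_ncf h₂ (List.cons_ne_nil y m)
      rw [← he, ncf] at this
      norm_num at this
  | cons x l ih =>
    cases L₂ with
    | nil =>
      have := one_lt_ncf h₁ (List.cons_ne_nil x l)
      rw [he, ncf] at this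
      norm_num at this
    | cons y m =>
      have hl : ∀ z ∈ l, 2 ≤ z := fun z hz => h₁ z (List.mem_cons_of_mem x hz)
      have hm : ∀ z ∈ m, 2 ≤ z := fun z hz => h₂ z (List.mem_cons_of_mem y hz)
      obtain rfl : x = y := by rw [← ceil_ncf_cons x hl, he, ceil_ncf_cons y hm]
      rw [ih hl hm (by simpa [ncf] using he)]

-- `incFirst [] = [2]` makes `dual [x] = replicate (x - 1) 2` fit the recursion of `dual`.
def incFirst : List ℤ → List ℤ
  | [] => [2]
  | x :: l => (x + 1) :: l

-- The expansion of `r / (r - 1)` from that of `r` (Riemenschneider's point diagram duality).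
def dual : List ℤ → List ℤ
  | [] => []
  | x :: l => List.replicate (x - 2).toNat 2 ++ incFirst (dual l)

theorem ncf_incFirst {M : List ℤ} (hM : M ≠ []) : ncf (incFirst M) = ncf M + 1 := by
  obtain ⟨x, l, rfl⟩ := List.exists_cons_of_ne_nil hM
  simp only [incFirst, ncf]
  push_cast
  ring

theorem dual_ne_nil {L : List ℤ} (hL : L ≠ []) : dual L ≠ [] := by
  obtain ⟨x, l, rfl⟩ := List.exists_cons_of_ne_nil hL
  cases h : dual l <;> simp [dual, incFirst, h]

theorem two_le_of_mem_dual : ∀ {L : List ℤ}, (∀ y ∈ L, 2 ≤ y) → ∀ y ∈ dual L, 2 ≤ y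
  | [], _ => by simp [dual]
  | x :: l, h => by
    have ih := two_le_of_mem_dual (fun z hz => h z (List.mem_cons_of_mem x hz))
    intro y hy
    simp only [dual, List.mem_append, List.mem_replicate] at hy
    rcases hy with ⟨-, rfl⟩ | hy
    · exact le_rfl
    · revert ih hy
      cases dual l with
      | nil => rintro - hy; simp [incFirst] at hy; omega
      | cons z m =>
        simp only [incFirst, List.mem_cons]
        rintro ih (rfl | hy)
        · linarith [ih z (by simp)]
        · exact ih y (by simp [hy])

theorem ncf_replicate_two_append {M : List ℤ} {s : ℚ} (hs : 1 < s) (hM : ncf M = s / (s - 1))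
    (k : ℕ) : ncf (List.replicate k 2 ++ M) = (s + k) / (s + k - 1) := by
  induction k with
  | zero => simpa using hM
  | succ k ih =>
    have hk : (0 : ℚ) ≤ k := k.cast_nonneg
    have h1 : s + k - 1 ≠ 0 := by linarith
    have h2 : s + k ≠ 0 := by linarith
    rw [List.replicate_succ, List.cons_append, ncf, ih, inv_div]
    push_cast
    rw [show s + (k + 1) - 1 = s + k by ring]
    field_simp
    ring

theorem ncf_dual : ∀ {L : List ℤ}, (∀ y ∈ L, 2 ≤ y) → ncf (dual L) = ncf L / (ncf L - 1)
  | [], _ => by simp [ncf, dual]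
  | x :: l, h => by
    have hl : ∀ y ∈ l, 2 ≤ y := fun y hy => h y (List.mem_cons_of_mem x hy)
    obtain ⟨h0, h1⟩ := inv_ncf_nonneg_lt_one hl
    set s : ℚ := 2 - (ncf l)⁻¹ with hs_def
    have hs : 1 < s := by linarith
    have hinc : ncf (incFirst (dual l)) = s / (s - 1) := by
      rcases eq_or_ne l [] with rfl | hne
      · norm_num [s, ncf, dual, incFirst]
      · have hr := one_lt_ncf hl hne
        rw [ncf_incFirst (dual_ne_nil hne), ncf_dual hl, hs_def]
        have h1 : ncf l - 1 ≠ 0 := by linarith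
        have h2 : ncf l ≠ 0 := by linarith
        rw [div_add_one h1, show 2 - (ncf l)⁻¹ - 1 = (ncf l - 1) / ncf l by field_simp; ring,
          show 2 - (ncf l)⁻¹ = (2 * ncf l - 1) / ncf l by field_simp, div_div_div_cancel_right₀ h2]
        ring
    have hk : (((x - 2).toNat : ℕ) : ℚ) = x - 2 := by
      have : (2 : ℤ) ≤ x := h x (by simp)
      exact_mod_cast Int.toNat_of_nonneg (by omega)
    rw [dual, ncf_replicate_two_append hs hinc, hk,
      show s + (x - 2) = ncf (x :: l) by rw [ncf]; ring]

-- `excessSum L p + 2` is the paper's `l_p` for `L = [α₁, …, α_N]`.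
def excessSum (L : List ℤ) (p : ℕ) : ℕ := ∑ q ∈ range p, (L.getD q 0 - 2).toNat

theorem excessSum_cons_succ (x : ℤ) (l : List ℤ) (p : ℕ) :
    excessSum (x :: l) (p + 1) = (x - 2).toNat + excessSum l p := by
  simp [excessSum, sum_range_succ', add_comm]

theorem card_filter_excessSum_cons_of_lt {x : ℤ} {l : List ℤ} {i : ℕ} (hi : i < (x - 2).toNat) :
    #{p ∈ Ico 1 (l.length + 1) | excessSum (x :: l) p = i} = 0 := by
  rw [card_eq_zero, filter_eq_empty_iff]
  intro p hp
  obtain ⟨p, rfl⟩ := Nat.exists_eq_add_of_le' (mem_Ico.1 hp).1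
  rw [excessSum_cons_succ]
  omega

theorem card_filter_excessSum_cons_add (x : ℤ) (l : List ℤ) (i : ℕ) :
    #{p ∈ Ico 1 (l.length + 1) | excessSum (x :: l) p = (x - 2).toNat + i} =
      #{p ∈ range l.length | excessSum l p = i} := by
  rw [← zero_add 1, ← map_add_right_Ico, ← range_eq_Ico, filter_map, card_map]
  congr 1
  refine filter_congr fun p _ => ?_
  simp [excessSum_cons_succ]

theorem card_filter_excessSum_range {L : List ℤ} (hL : L ≠ []) (i : ℕ) :
    #{p ∈ range L.length | excessSum L p = i} =
      #{p ∈ Ico 1 L.length | excessSum L p = i} + if i = 0 then 1 else 0 := by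
  rw [card_filter, card_filter, range_eq_Ico,
    sum_eq_sum_Ico_succ_bot (List.length_pos_iff.2 hL), add_comm]
  simp [excessSum, eq_comm]

theorem dual_eq_map_range : ∀ {L : List ℤ}, L ≠ [] →
    dual L = (List.range (excessSum L L.length + 1)).map
      fun i => 2 + (#{p ∈ Ico 1 L.length | excessSum L p = i} : ℤ)
  | x :: l, _ => by
    rw [List.length_cons, excessSum_cons_succ, dual, add_assoc, List.range_add, List.map_append]
    congr 1
    · refine (List.eq_replicate_iff.2 ⟨by simp, ?_⟩).symm
      simp only [List.mem_map, List.mem_range]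
      rintro _ ⟨i, hi, rfl⟩
      simp [card_filter_excessSum_cons_of_lt hi]
    rcases eq_or_ne l [] with rfl | hl
    · simp [dual, incFirst, excessSum]
    rw [dual_eq_map_range hl, List.range_succ_eq_map]
    simp only [List.map_cons, List.map_map, incFirst, card_filter_excessSum_cons_add,
      card_filter_excessSum_range hl, List.cons.injEq, List.map_inj_left]
    refine ⟨by simp; ring, fun i _ => ?_⟩
    simp [card_filter_excessSum_cons_add, card_filter_excessSum_range hl]

theorem sum_filter_comp_eq_sum_card_nsmul {ι κ M : Type*} [AddCommMonoid M] [DecidableEq κ]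
    (s : Finset ι) (T : Finset κ) (g : ι → κ) (f : κ → M) :
    ∑ x ∈ s with g x ∈ T, f (g x) = ∑ y ∈ T, #{x ∈ s | g x = y} • f y := by
  rw [← sum_fiberwise_of_maps_to (g := g) (t := T) fun x hx => (mem_filter.1 hx).2]
  refine sum_congr rfl fun y hy => ?_
  rw [sum_congr rfl fun x hx => by rw [(mem_filter.1 hx).2], sum_const, filter_filter]
  congr 2
  exact filter_congr fun x _ => ⟨And.right, fun h => ⟨h ▸ hy, h⟩⟩

theorem sub_eq_sub_add_sum_of_rec {f a : ℕ → ℤ} {m M : ℕ}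
    (hrec : ∀ j, m + 2 ≤ j → j ≤ M → f j = a (j - 1) * f (j - 1) - f (j - 2))
    {t : ℕ} (hmt : m ≤ t) (htM : t + 1 ≤ M) :
    f (t + 1) - f t = f (m + 1) - f m + ∑ j ∈ Ioc m t, (a j - 2) * f j := by
  induction t, hmt using Nat.le_induction with
  | base => simp
  | succ t hmt ih =>
    have h := hrec (t + 2) (by omega) htM
    simp only [Nat.add_sub_cancel, show t + 2 - 1 = t + 1 by omega] at h
    rw [sum_Ioc_succ_top hmt, h]
    linear_combination ih (by omega)

theorem monotoneOn_sum_Icc_sub_two {N : ℕ} {α : ℕ → ℤ} (hα : ∀ t, 1 ≤ t → t ≤ N → 2 ≤ α t) :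
    MonotoneOn (fun m => ∑ p ∈ Icc 1 m, (α p - 2)) (Set.Iic N) := fun m _ m' hm' hm =>
  sum_le_sum_of_subset_of_nonneg (Icc_subset_Icc_right hm) fun p hp _ => by
    have := mem_Icc.1 hp
    have := Set.mem_Iic.1 hm'
    linarith [hα p (by omega) (by omega)]

theorem lt_iff_lt_of_isLeast {σ : ℕ → ℤ} {N k : ℕ} {t : ℤ} (hσ : MonotoneOn σ (Set.Iic N))
    (hk : IsLeast {m | 1 ≤ m ∧ m ≤ N ∧ t ≤ σ m} k) {s : ℕ} (hs : 1 ≤ s) (hsN : s ≤ N) :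
    s < k ↔ σ s < t := by
  obtain ⟨⟨-, hkN, hkt⟩, hmin⟩ := hk
  constructor
  · intro hsk
    by_contra! hts
    exact absurd (hmin ⟨hs, hsN, hts⟩) (not_le.2 hsk)
  · intro hst
    by_contra! hks
    exact absurd (hkt.trans (hσ hkN hsN hks)) (not_le.2 hst)

theorem excessSum_ofFn {N : ℕ} {α : ℕ → ℤ} (hα : ∀ t, 1 ≤ t → t ≤ N → 2 ≤ α t) {p : ℕ}
    (hp : p ≤ N) :
    (excessSum (List.ofFn fun j : Fin N => α (j + 1)) p : ℤ) = ∑ s ∈ Icc 1 p, (α s - 2) := by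
  rw [excessSum, Nat.cast_sum, ← Ico_add_one_right_eq_Icc, ← zero_add 1, ← sum_Ico_add',
    ← range_eq_Ico]
  refine sum_congr rfl fun s hs => ?_
  have hsN : s < N := by have := mem_range.1 hs; omega
  have h2 := hα (s + 1) (by omega) (by omega)
  simp only [zero_add, List.getD_eq_getElem?_getD, List.length_ofFn, hsN, getElem?_pos,
    List.getElem_ofFn, Option.getD_some, Int.ofNat_toNat, sup_eq_left]
  omega

theorem ofFn_eq_dual {n q : ℤ} (hq : 1 < q) {N : ℕ} {α : ℕ → ℤ}
    (hαb : ∀ t, 1 ≤ t → t ≤ N → 2 ≤ α t)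
    (hncf : ncf (List.ofFn (fun j : Fin N => α (j + 1))) = (n : ℚ) / (q : ℚ))
    {e : ℕ} {a : ℕ → ℤ} (hab : ∀ j, 2 ≤ j → j ≤ e - 1 → 2 ≤ a j)
    (hancf : ncf (List.ofFn (fun j : Fin (e - 2) => a (j + 2))) =
      (n : ℚ) / ((n : ℚ) - (q : ℚ))) :
    List.ofFn (fun j : Fin (e - 2) => a (j + 2)) = dual (List.ofFn fun j : Fin N => α (j + 1)) := by
  have hα : ∀ y ∈ List.ofFn (fun j : Fin N => α (j + 1)), 2 ≤ y := by
    simp only [List.mem_ofFn, forall_exists_index]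
    rintro _ j rfl
    exact hαb _ (by omega) (by omega)
  have ha : ∀ y ∈ List.ofFn (fun j : Fin (e - 2) => a (j + 2)), 2 ≤ y := by
    simp only [List.mem_ofFn, forall_exists_index]
    rintro _ j rfl
    exact hab _ (by omega) (by omega)
  have hq0 : (q : ℚ) ≠ 0 := by exact_mod_cast (by omega : q ≠ 0)
  refine ncf_injOn ha (two_le_of_mem_dual hα) ?_
  rw [hancf, ncf_dual hα, hncf, div_sub_one hq0, div_div_div_cancel_right₀ hq0]

theorem riemenschneider_duality {n q : ℤ} (hq : 1 < q) {N : ℕ} (hN : 1 ≤ N) {α : ℕ → ℤ}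
    (hαb : ∀ t, 1 ≤ t → t ≤ N → 2 ≤ α t)
    (hncf : ncf (List.ofFn (fun j : Fin N => α (j + 1))) = (n : ℚ) / (q : ℚ))
    {e : ℕ} {a : ℕ → ℤ} (hab : ∀ j, 2 ≤ j → j ≤ e - 1 → 2 ≤ a j)
    (hancf : ncf (List.ofFn (fun j : Fin (e - 2) => a (j + 2))) =
      (n : ℚ) / ((n : ℚ) - (q : ℚ)))
    {l : ℕ → ℕ} (hl : ∀ j, (l j : ℤ) = 2 + ∑ p ∈ Icc 1 j, (α p - 2)) :
    e = l N + 1 ∧ ∀ j, 2 ≤ j → j ≤ e - 1 → a j = 2 + #{p ∈ Ico 1 N | l p = j} := by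
  have hdual := ofFn_eq_dual hq hαb hncf hab hancf
  rw [dual_eq_map_range (by simpa using Nat.pos_iff_ne_zero.1 hN), List.length_ofFn] at hdual
  have hl_eq : ∀ p ≤ N, l p = excessSum (List.ofFn fun j : Fin N => α (j + 1)) p + 2 := by
    intro p hp
    have := excessSum_ofFn hαb hp
    have := hl p
    omega
  have hlen := congrArg List.length hdual
  simp only [List.length_ofFn, List.length_map, List.length_range] at hlen
  refine ⟨by rw [hl_eq N le_rfl]; omega, fun j hj2 hje => ?_⟩
  have hentry := List.getElem_of_eq hdual (i := j - 2) (by simp; omega)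
  simp only [List.getElem_ofFn, List.getElem_map, List.getElem_range] at hentry
  rw [show j - 2 + 2 = j by omega] at hentry
  rw [hentry]
  congr 3
  refine filter_congr fun p hp => ?_
  rw [hl_eq p (by have := mem_Ico.1 hp; omega)]
  omega

theorem three_le_iff_lt {N ν : ℕ} {α : ℕ → ℤ} (hαb : ∀ t, 1 ≤ t → t ≤ N → 2 ≤ α t)
    {l : ℕ → ℕ} (hl : ∀ j, (l j : ℤ) = 2 + ∑ p ∈ Icc 1 j, (α p - 2))
    (hν2 : ∀ t, 1 ≤ t → t ≤ ν → α t = 2) (hν3 : ν = N ∨ 3 ≤ α (ν + 1)) {s : ℕ} (hs : s ≤ N) :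
    3 ≤ l s ↔ ν < s := by
  have hls := hl s
  constructor
  · intro h3
    by_contra! hsν
    have : ∑ p ∈ Icc 1 s, (α p - 2) = 0 :=
      sum_eq_zero fun p hp => by rw [hν2 p (mem_Icc.1 hp).1 ((mem_Icc.1 hp).2.trans hsν)]; ring
    omega
  · intro hνs
    have hα3 : 3 ≤ α (ν + 1) := hν3.resolve_left (by omega)
    have := single_le_sum (f := fun p => α p - 2) (s := Icc 1 s)
      (fun p hp => by have := mem_Icc.1 hp; linarith [hαb p (by omega) (by omega)])
      (mem_Icc.2 ⟨by omega, hνs⟩ : ν + 1 ∈ Icc 1 s)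
    omega

theorem b_le_and_lt_b_iff {N : ℕ} {α : ℕ → ℤ} (hαb : ∀ t, 1 ≤ t → t ≤ N → 2 ≤ α t)
    {l : ℕ → ℕ} (hl : ∀ j, (l j : ℤ) = 2 + ∑ p ∈ Icc 1 j, (α p - 2))
    {b : ℕ → ℕ} (hblN : b (l N - 1) = N)
    (hb : ∀ t, 1 ≤ t → t ≤ l N - 2 →
      1 ≤ b t ∧ b t ≤ N ∧ (t : ℤ) ≤ ∑ p ∈ Icc 1 (b t), (α p - 2) ∧
        ∀ m, 1 ≤ m → m ≤ N → (t : ℤ) ≤ ∑ p ∈ Icc 1 m, (α p - 2) → b t ≤ m)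
    {t : ℕ} (ht : 1 ≤ t) (htN : t + 1 ≤ l N) :
    b t ≤ N ∧ ∀ s, 1 ≤ s → s < N → (s < b t ↔ l s ≤ t + 1) := by
  have hmono := monotoneOn_sum_Icc_sub_two hαb
  rcases Nat.lt_or_ge t (l N - 1) with htN' | htN'
  · obtain ⟨hb1, hbN, hbt, hmin⟩ := hb t ht (by omega)
    refine ⟨hbN, fun s hs hsN => ?_⟩
    rw [lt_iff_lt_of_isLeast hmono ⟨⟨hb1, hbN, hbt⟩, fun m hm => hmin m hm.1 hm.2.1 hm.2.2⟩ hs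
      hsN.le]
    have := hl s
    omega
  · rw [show t = l N - 1 by omega, hblN]
    refine ⟨le_rfl, fun s _ hsN => iff_of_true hsN ?_⟩
    have : ∑ p ∈ Icc 1 s, (α p - 2) ≤ ∑ p ∈ Icc 1 N, (α p - 2) :=
      hmono (Set.mem_Iic.2 hsN.le) (Set.mem_Iic.2 le_rfl) hsN.le
    have := hl s
    have := hl N
    omega

theorem Icc_pred_b_eq_filter {N ν : ℕ} {α : ℕ → ℤ} (hαb : ∀ t, 1 ≤ t → t ≤ N → 2 ≤ α t)
    {l : ℕ → ℕ} (hl : ∀ j, (l j : ℤ) = 2 + ∑ p ∈ Icc 1 j, (α p - 2))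
    {b : ℕ → ℕ} (hblN : b (l N - 1) = N)
    (hb : ∀ t, 1 ≤ t → t ≤ l N - 2 →
      1 ≤ b t ∧ b t ≤ N ∧ (t : ℤ) ≤ ∑ p ∈ Icc 1 (b t), (α p - 2) ∧
        ∀ m, 1 ≤ m → m ≤ N → (t : ℤ) ≤ ∑ p ∈ Icc 1 m, (α p - 2) → b t ≤ m)
    (hν2 : ∀ t, 1 ≤ t → t ≤ ν → α t = 2) (hν3 : ν = N ∨ 3 ≤ α (ν + 1))
    {t : ℕ} (ht : 1 ≤ t) (htN : t + 1 ≤ l N) :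
    Icc (ν + 1) (b t - 1) = {p ∈ Ico 1 N | l p ∈ Icc 3 (t + 1)} := by
  obtain ⟨hbN, hlt⟩ := b_le_and_lt_b_iff hαb hl hblN hb ht htN
  ext s
  simp only [mem_Icc, mem_filter, mem_Ico]
  constructor
  · rintro ⟨hνs, hsb⟩
    have := hlt s (by omega) (by omega)
    have := three_le_iff_lt hαb hl hν2 hν3 (s := s) (by omega)
    omega
  · rintro ⟨⟨hs, hsN⟩, h3, hst⟩
    have := hlt s hs hsN
    have := three_le_iff_lt hαb hl hν2 hν3 hsN.le
    omega

theorem stmt12_general (n q : ℤ) (hq : 1 < q)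
    (N : ℕ) (hN : 1 ≤ N) (α : ℕ → ℤ) (hαb : ∀ t, 1 ≤ t → t ≤ N → 2 ≤ α t)
    (hncf : ncf (List.ofFn (fun j : Fin N => α (j + 1))) = (n : ℚ) / (q : ℚ))
    (e : ℕ) (a : ℕ → ℤ) (hab : ∀ j, 2 ≤ j → j ≤ e - 1 → 2 ≤ a j)
    (hancf : ncf (List.ofFn (fun j : Fin (e - 2) => a (j + 2))) =
      (n : ℚ) / ((n : ℚ) - (q : ℚ)))
    (c d : ℕ → ℤ)
    (hc3 : c 3 = 0) (hc4 : c 4 = 1)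
    (hcrec : ∀ j, 5 ≤ j → j ≤ e → c j = a (j - 1) * c (j - 1) - c (j - 2))
    (hd3 : d 3 = 1) (hd4 : d 4 = a 3 - 1)
    (hdrec : ∀ j, 5 ≤ j → j ≤ e → d j = a (j - 1) * d (j - 1) - d (j - 2))
    (l : ℕ → ℕ) (hl : ∀ j, (l j : ℤ) = 2 + ∑ p ∈ Finset.Icc 1 j, (α p - 2))
    (b : ℕ → ℕ) (hblN : b (l N - 1) = N)
    (hb : ∀ t, 1 ≤ t → t ≤ l N - 2 →
      1 ≤ b t ∧ b t ≤ N ∧ (t : ℤ) ≤ ∑ p ∈ Finset.Icc 1 (b t), (α p - 2) ∧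
        ∀ m, 1 ≤ m → m ≤ N → (t : ℤ) ≤ ∑ p ∈ Finset.Icc 1 m, (α p - 2) → b t ≤ m)
    (ν : ℕ) (hν2 : ∀ t, 1 ≤ t → t ≤ ν → α t = 2)
    (hν3 : ν = N ∨ 3 ≤ α (ν + 1)) :
    ∀ t, 2 ≤ t → t ≤ e - 2 →
      c (t + 2) = c (t + 1) + (1 + ∑ s ∈ Finset.Icc (ν + 1) (b t - 1), c (l s)) ∧
      d (t + 2) = d (t + 1) + ∑ s ∈ Finset.Icc (ν + 1) (b t - 1), d (l s) := by
  intro t ht2 hte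
  obtain ⟨rfl, ha⟩ := riemenschneider_duality hq hN hαb hncf hab hancf hl
  have hsum : ∀ f : ℕ → ℤ, ∑ s ∈ Icc (ν + 1) (b t - 1), f (l s) =
      (a 3 - 2) * f 3 + ∑ j ∈ Ioc 3 (t + 1), (a j - 2) * f j := by
    intro f
    rw [Icc_pred_b_eq_filter hαb hl hblN hb hν2 hν3 (by omega) (by omega),
      sum_filter_comp_eq_sum_card_nsmul, ← sum_cons (f := fun j => (a j - 2) * f j) left_notMem_Ioc,
      ← Icc_eq_cons_Ioc (by omega)]
    refine sum_congr rfl fun j hj => ?_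
    rw [ha j (by have := mem_Icc.1 hj; omega) (by have := mem_Icc.1 hj; omega), nsmul_eq_mul]
    ring
  have hc := sub_eq_sub_add_sum_of_rec (m := 3) hcrec (t := t + 1) (by omega) (by omega)
  have hd := sub_eq_sub_add_sum_of_rec (m := 3) hdrec (t := t + 1) (by omega) (by omega)
  rw [hsum, hsum]
  exact ⟨by linear_combination hc + hc4 - (a 3 - 1) * hc3,
    by linear_combination hd + hd4 - (a 3 - 1) * hd3⟩

theorem stmt12 (n q : ℤ) (hq : 1 < q) (hn : q < n) (hcop : IsCoprime n q)
    (N : ℕ) (hN : 1 ≤ N) (α : ℕ → ℤ) (hαb : ∀ t, 1 ≤ t → t ≤ N → 2 ≤ α t)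
    (hncf : ncf (List.ofFn (fun j : Fin N => α (j + 1))) = (n : ℚ) / (q : ℚ))
    (e : ℕ) (he : 3 ≤ e) (a : ℕ → ℤ) (hab : ∀ j, 2 ≤ j → j ≤ e - 1 → 2 ≤ a j)
    (hancf : ncf (List.ofFn (fun j : Fin (e - 2) => a (j + 2))) =
      (n : ℚ) / ((n : ℚ) - (q : ℚ)))
    (c d : ℕ → ℤ)
    (hc2 : c 2 = 1) (hc3 : c 3 = 0) (hc4 : c 4 = 1)
    (hcrec : ∀ j, 5 ≤ j → j ≤ e → c j = a (j - 1) * c (j - 1) - c (j - 2))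
    (hd2 : d 2 = 0) (hd3 : d 3 = 1) (hd4 : d 4 = a 3 - 1)
    (hdrec : ∀ j, 5 ≤ j → j ≤ e → d j = a (j - 1) * d (j - 1) - d (j - 2))
    (l : ℕ → ℕ) (hl : ∀ j, (l j : ℤ) = 2 + ∑ p ∈ Finset.Icc 1 j, (α p - 2))
    (b : ℕ → ℕ) (hb0 : b 0 = 1) (hblN : b (l N - 1) = N)
    (hb : ∀ t, 1 ≤ t → t ≤ l N - 2 →
      1 ≤ b t ∧ b t ≤ N ∧ (t : ℤ) ≤ ∑ p ∈ Finset.Icc 1 (b t), (α p - 2) ∧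
        ∀ m, 1 ≤ m → m ≤ N → (t : ℤ) ≤ ∑ p ∈ Finset.Icc 1 m, (α p - 2) → b t ≤ m)
    (ν : ℕ) (hνN : ν ≤ N) (hν2 : ∀ t, 1 ≤ t → t ≤ ν → α t = 2)
    (hν3 : ν = N ∨ 3 ≤ α (ν + 1)) :
    ∀ t, 2 ≤ t → t ≤ e - 2 →
      c (t + 2) = c (t + 1) + (1 + ∑ s ∈ Finset.Icc (ν + 1) (b t - 1), c (l s)) ∧
      d (t + 2) = d (t + 1) + ∑ s ∈ Finset.Icc (ν + 1) (b t - 1), d (l s) :=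
  stmt12_general n q hq N hN α hαb hncf e a hab hancf c d hc3 hc4 hcrec hd3 hd4 hdrec l hl b hblN hb
    ν hν2 hν3
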